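/- arXiv:1306.2665 — 5 statements merged into one kernel-verified Lean document; each statement's English description precedes it below -/
import Mathlib

section
/- Let 1 ≤ l ≤ k ≤ n. Then α_k ≤ (1/C(k-1,l-1)) · Σ_{j=1}^{C(k,l)} α_{l,L_{i_j}}, where α_{l,L} := sup over nonzero null-space vectors z of ‖z_L‖₁/‖z‖₁ for each subset L of {1,...,n} with |L| = l, and L_{i_1}, ..., L_{i_{C(k,l)}} are the C(k,l) subsets of cardinality l with the largest values of α_{l,L}. -/
/-- A strictly monotone map `Fin m → ℕ` satisfies `j ≤ f j`. -/
lemma fin_strictMono_le_apply {m : ℕ} (f : Fin m → ℕ) (hf : StrictMono f) :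
    ∀ v : ℕ, ∀ j : Fin m, (j : ℕ) = v → v ≤ f j := by
  intro v
  induction v with
  | zero => intro j _; exact Nat.zero_le _
  | succ w ih =>
    intro j hj
    have hw : w < m := by omega
    have h1 : (⟨w, hw⟩ : Fin m) < j := by
      simp [Fin.lt_def]; omega
    have h2 := hf h1
    have h3 := ih ⟨w, hw⟩ rfl
    omega

/-- Sum of `f` over a subset `T` of `range N` with `T.card = m` is at most the sum of the
first `m` values, when `f` is descending on `range N`. -/
lemma sum_le_sum_range_of_sorted (N m : ℕ) (f : ℕ → ℝ)
    (hs : ∀ i j : ℕ, i ≤ j → j < N → f j ≤ f i)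
    (T : Finset ℕ) (hT : ∀ t ∈ T, t < N) (hTm : T.card = m) :
    ∑ t ∈ T, f t ≤ ∑ j ∈ Finset.range m, f j := by
  set g := T.orderEmbOfFin hTm with hg
  have hsum : ∑ t ∈ T, f t = ∑ j : Fin m, f (g j) := by
    refine (Finset.sum_bij (fun (j : Fin m) _ => g j) ?_ ?_ ?_ ?_).symm
    · intro a _; exact T.orderEmbOfFin_mem hTm a
    · intro a _ b _ hab; exact g.injective hab
    · intro t ht
      have : t ∈ Set.range g := by rw [hg, Finset.range_orderEmbOfFin]; exact ht
      obtain ⟨j, hjt⟩ := this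
      exact ⟨j, Finset.mem_univ j, hjt⟩
    · intro a _; rfl
  rw [hsum, Finset.sum_range]
  apply Finset.sum_le_sum
  intro j _
  have hle : (j : ℕ) ≤ g j :=
    fin_strictMono_le_apply (fun i => g i) (fun a b hab => g.strictMono hab) j j rfl
  exact hs j (g j) hle (hT _ (T.orderEmbOfFin_mem hTm j))

/-- Each element of a `k`-set lies in `C(k-1, l-1)` of its `l`-subsets. -/
lemma card_powersetCard_filter_mem {n k l : ℕ} (hl : 1 ≤ l)
    (K : Finset (Fin n)) (hK : K.card = k) (i : Fin n) (hi : i ∈ K) :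
    ((K.powersetCard l).filter (fun L => i ∈ L)).card = Nat.choose (k - 1) (l - 1) := by
  have hbij : ((K.powersetCard l).filter (fun L => i ∈ L)).card
      = ((K.erase i).powersetCard (l - 1)).card := by
    refine Finset.card_bij' (fun L _ => L.erase i) (fun M _ => insert i M) ?hi ?hj ?li ?ri
    case hi =>
      intro L hL
      rw [Finset.mem_filter, Finset.mem_powersetCard] at hL
      rw [Finset.mem_powersetCard]
      exact ⟨Finset.erase_subset_erase i hL.1.1,
        by rw [Finset.card_erase_of_mem hL.2, hL.1.2]⟩
    case hj =>
      intro M hM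
      rw [Finset.mem_powersetCard] at hM
      have hiM : i ∉ M := fun h => (Finset.notMem_erase i K) (hM.1 h)
      rw [Finset.mem_filter, Finset.mem_powersetCard]
      refine ⟨⟨Finset.insert_subset hi (hM.1.trans (Finset.erase_subset i K)), ?_⟩,
        Finset.mem_insert_self i M⟩
      rw [Finset.card_insert_of_notMem hiM, hM.2]
      omega
    case li =>
      intro L hL
      rw [Finset.mem_filter] at hL
      exact Finset.insert_erase hL.2
    case ri =>
      intro M hM
      rw [Finset.mem_powersetCard] at hM
      exact Finset.erase_insert (fun h => (Finset.notMem_erase i K) (hM.1 h))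
  rw [hbij, Finset.card_powersetCard, Finset.card_erase_of_mem hi, hK]

/-- Double counting: summing `g` over all `l`-subsets of a `k`-set `K` counts each
element `C(k-1,l-1)` times. -/
lemma sum_powersetCard_sum {n k l : ℕ} (hl : 1 ≤ l) (K : Finset (Fin n)) (hK : K.card = k)
    (g : Fin n → ℝ) :
    ∑ L ∈ K.powersetCard l, ∑ i ∈ L, g i
      = (Nat.choose (k - 1) (l - 1) : ℝ) * ∑ i ∈ K, g i := by
  have h1 : ∀ L ∈ K.powersetCard l, ∑ i ∈ L, g i = ∑ i ∈ K, if i ∈ L then g i else 0 := by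
    intro L hL
    rw [Finset.mem_powersetCard] at hL
    rw [Finset.sum_ite_mem, Finset.inter_eq_right.2 hL.1]
  rw [Finset.sum_congr rfl h1, Finset.sum_comm]
  have h2 : ∀ i ∈ K, ∑ L ∈ K.powersetCard l, (if i ∈ L then g i else 0)
      = (Nat.choose (k - 1) (l - 1) : ℝ) * g i := by
    intro i hi
    rw [← Finset.sum_filter, Finset.sum_const,
      card_powersetCard_filter_mem hl K hK i hi, nsmul_eq_mul]
  rw [Finset.sum_congr rfl h2, ← Finset.mul_sum]

/-- α_k ≤ (1/C(k-1,l-1)) · sum of the C(k,l) largest values α_{l,L}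
over the l-element subsets L of {1,...,n}. -/
theorem pick_l_upper_bound
    (p n k l : ℕ) (hl : 1 ≤ l) (hlk : l ≤ k) (hkn : k ≤ n)
    (A : Matrix (Fin p) (Fin n) ℝ)
    (αk : ℝ)
    (hαk : IsGreatest {r : ℝ | ∃ z : Fin n → ℝ, A.mulVec z = 0 ∧ z ≠ 0 ∧
        ∃ K : Finset (Fin n), K.card ≤ k ∧
          r = (∑ i ∈ K, |z i|) / (∑ i, |z i|)} αk)
    (α : Finset (Fin n) → ℝ)
    (hα : ∀ L : Finset (Fin n), L.card = l →
        IsGreatest {r : ℝ | ∃ z : Fin n → ℝ, A.mulVec z = 0 ∧ z ≠ 0 ∧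
          r = (∑ i ∈ L, |z i|) / (∑ i, |z i|)} (α L))
    -- e enumerates the l-element subsets of {1,...,n} in descending order of α
    (e : ℕ → Finset (Fin n))
    (he : Set.BijOn e (Finset.range (Nat.choose n l) : Set ℕ)
        ((Finset.univ.powersetCard l : Finset (Finset (Fin n))) : Set (Finset (Fin n))))
    (hsort : ∀ i j : ℕ, i ≤ j → j < Nat.choose n l → α (e j) ≤ α (e i)) :
    αk ≤ (1 / (Nat.choose (k - 1) (l - 1) : ℝ)) *
        ∑ j ∈ Finset.range (Nat.choose k l), α (e j) := by
  classical
  obtain ⟨⟨z, hAz, hz, K, hKc, hr⟩, _⟩ := hαk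
  set S : ℝ := ∑ i, |z i| with hSdef
  have hS0 : 0 < S := by
    obtain ⟨i, hi⟩ := Function.ne_iff.1 hz
    exact Finset.sum_pos' (fun j _ => abs_nonneg _)
      ⟨i, Finset.mem_univ i, abs_pos.2 hi⟩
  obtain ⟨K', hKK', _, hK'c⟩ := Finset.exists_subsuperset_card_eq (Finset.subset_univ K) hKc
    (by rw [Finset.card_univ, Fintype.card_fin]; exact hkn)
  have hch : (0:ℝ) < (Nat.choose (k-1) (l-1) : ℝ) := by
    exact_mod_cast Nat.choose_pos (Nat.sub_le_sub_right hlk 1)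
  -- key double-counting identity
  have key : ∑ L ∈ K'.powersetCard l, ∑ i ∈ L, |z i|
      = (Nat.choose (k - 1) (l - 1) : ℝ) * ∑ i ∈ K', |z i| :=
    sum_powersetCard_sum hl K' hK'c (fun i => |z i|)
  -- each l-subset contributes at most α L * S
  have hterm : ∀ L ∈ K'.powersetCard l, ∑ i ∈ L, |z i| ≤ α L * S := by
    intro L hL
    obtain ⟨_, hLc⟩ := Finset.mem_powersetCard.1 hL
    have hmem : (∑ i ∈ L, |z i|) / S ≤ α L := (hα L hLc).2 ⟨z, hAz, hz, rfl⟩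
    calc ∑ i ∈ L, |z i| = ((∑ i ∈ L, |z i|) / S) * S := by field_simp
      _ ≤ α L * S := mul_le_mul_of_nonneg_right hmem hS0.le
  -- the sum of α over l-subsets of K' is at most the sum of the C(k,l) largest values
  have hsum2 : ∑ L ∈ K'.powersetCard l, α L
      ≤ ∑ j ∈ Finset.range (Nat.choose k l), α (e j) := by
    set T : Finset ℕ := (Finset.range (Nat.choose n l)).filter
      (fun t => e t ∈ K'.powersetCard l) with hTdef
    have hTbij : ∀ L ∈ K'.powersetCard l, ∃ t ∈ T, e t = L := by
      intro L hL
      have hLu : L ∈ (Finset.univ.powersetCard l : Finset (Finset (Fin n))) := by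
        rw [Finset.mem_powersetCard] at hL ⊢
        exact ⟨Finset.subset_univ L, hL.2⟩
      obtain ⟨t, ht, het⟩ := he.surjOn hLu
      simp only [Finset.coe_range, Set.mem_Iio] at ht
      exact ⟨t, Finset.mem_filter.2 ⟨Finset.mem_range.2 ht, het ▸ hL⟩, het⟩
    have hinj : ∀ a ∈ T, ∀ b ∈ T, e a = e b → a = b := by
      intro a ha b hb hab
      rw [hTdef, Finset.mem_filter, Finset.mem_range] at ha hb
      exact he.injOn (by simpa using ha.1) (by simpa using hb.1) hab
    have hTsum : ∑ t ∈ T, α (e t) = ∑ L ∈ K'.powersetCard l, α L := by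
      refine Finset.sum_bij (fun t _ => e t) ?_ ?_ ?_ ?_
      · intro t ht; exact (Finset.mem_filter.1 ht).2
      · exact hinj
      · intro L hL; obtain ⟨t, ht, het⟩ := hTbij L hL; exact ⟨t, ht, het⟩
      · intro t _; rfl
    have hTcard : T.card = Nat.choose k l := by
      have : T.card = (K'.powersetCard l).card := by
        refine Finset.card_bij (fun t _ => e t) ?_ ?_ ?_
        · intro t ht; exact (Finset.mem_filter.1 ht).2
        · exact hinj
        · intro L hL; obtain ⟨t, ht, het⟩ := hTbij L hL; exact ⟨t, ht, het⟩
      rw [this, Finset.card_powersetCard, hK'c]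
    have hTlt : ∀ t ∈ T, t < Nat.choose n l := by
      intro t ht
      exact Finset.mem_range.1 (Finset.mem_filter.1 ht).1
    calc ∑ L ∈ K'.powersetCard l, α L = ∑ t ∈ T, α (e t) := hTsum.symm
      _ ≤ ∑ j ∈ Finset.range (Nat.choose k l), α (e j) :=
          sum_le_sum_range_of_sorted _ _ (fun t => α (e t)) hsort T hTlt hTcard
  -- combine
  have main : (Nat.choose (k-1) (l-1) : ℝ) * ∑ i ∈ K', |z i|
      ≤ (∑ j ∈ Finset.range (Nat.choose k l), α (e j)) * S := by
    rw [← key]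
    calc ∑ L ∈ K'.powersetCard l, ∑ i ∈ L, |z i|
        ≤ ∑ L ∈ K'.powersetCard l, α L * S := Finset.sum_le_sum hterm
      _ = (∑ L ∈ K'.powersetCard l, α L) * S := (Finset.sum_mul _ _ _).symm
      _ ≤ _ := mul_le_mul_of_nonneg_right hsum2 hS0.le
  have h1 : αk ≤ (∑ i ∈ K', |z i|) / S := by
    rw [hr]
    have hmono : ∑ i ∈ K, |z i| ≤ ∑ i ∈ K', |z i| :=
      Finset.sum_le_sum_of_subset_of_nonneg hKK' (fun i _ _ => abs_nonneg _)
    gcongr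
  have h2 : (∑ i ∈ K', |z i|) / S
      ≤ (1 / (Nat.choose (k - 1) (l - 1) : ℝ)) *
        ∑ j ∈ Finset.range (Nat.choose k l), α (e j) := by
    rw [div_le_iff₀ hS0, one_div, inv_mul_eq_div, div_mul_eq_mul_div, le_div_iff₀ hch,
      mul_comm]
    exact main
  exact h1.trans h2
end

section
/- For a fixed set K with |K| = k and 1 ≤ l ≤ k, define α_{k,K} := sup over nonzero null-space vectors z of ‖z_K‖₁/‖z‖₁. Then α_{k,K} ≤ (1/C(k-1,l-1)) · Σ_{L ⊆ K, |L| = l} α_{l,L}. -/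
/-- the `cheap' upper bound:
α_{k,K} ≤ (1/C(k-1,l-1)) · Σ_{L ⊆ K, |L| = l} α_{l,L}. -/
theorem cheap_upper_bound
    (p n k l : ℕ) (hl : 1 ≤ l) (hlk : l ≤ k)
    (A : Matrix (Fin p) (Fin n) ℝ)
    (hN : ∃ z : Fin n → ℝ, A.mulVec z = 0 ∧ z ≠ 0)
    (K : Finset (Fin n)) (hK : K.card = k)
    (αkK : ℝ)
    (hαkK : IsGreatest {r : ℝ | ∃ z : Fin n → ℝ, A.mulVec z = 0 ∧ z ≠ 0 ∧
        r = (∑ i ∈ K, |z i|) / (∑ i, |z i|)} αkK)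
    (α : Finset (Fin n) → ℝ)
    (hα : ∀ L : Finset (Fin n), L ⊆ K → L.card = l →
        IsGreatest {r : ℝ | ∃ z : Fin n → ℝ, A.mulVec z = 0 ∧ z ≠ 0 ∧
          r = (∑ i ∈ L, |z i|) / (∑ i, |z i|)} (α L)) :
    αkK ≤ (1 / (Nat.choose (k - 1) (l - 1) : ℝ)) *
        ∑ L ∈ K.powersetCard l, α L := by
  obtain ⟨⟨z, hz0, hzne, hr⟩, -⟩ := hαkK
  set S : ℝ := ∑ i, |z i| with hSdef
  have hS : 0 < S := by
    obtain ⟨j, hj⟩ := Function.ne_iff.mp hzne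
    exact Finset.sum_pos' (fun i _ => abs_nonneg _)
      ⟨j, Finset.mem_univ j, abs_pos.mpr hj⟩
  have hC : 0 < ((k-1).choose (l-1) : ℝ) := by
    have h1 : l - 1 ≤ k - 1 := Nat.sub_le_sub_right hlk 1
    exact_mod_cast Nat.choose_pos h1
  have hcount : ∀ i ∈ K,
      ((K.powersetCard l).filter (fun L => i ∈ L)).card = (k-1).choose (l-1) := by
    intro i hi
    have hbij : ((K.powersetCard l).filter (fun L => i ∈ L)).card
        = ((K.erase i).powersetCard (l-1)).card := by
      refine Finset.card_bij' (fun L _ => L.erase i) (fun M _ => insert i M) ?_ ?_ ?_ ?_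
      · intro L hL
        simp only [Finset.mem_filter, Finset.mem_powersetCard] at hL
        obtain ⟨⟨hsub, hcard⟩, hiL⟩ := hL
        rw [Finset.mem_powersetCard]
        exact ⟨Finset.erase_subset_erase i hsub,
          by rw [Finset.card_erase_of_mem hiL, hcard]⟩
      · intro M hM
        rw [Finset.mem_powersetCard] at hM
        obtain ⟨hsub, hcard⟩ := hM
        have hiM : i ∉ M := fun h => (Finset.mem_erase.mp (hsub h)).1 rfl
        simp only [Finset.mem_filter, Finset.mem_powersetCard]
        refine ⟨⟨?_, ?_⟩, Finset.mem_insert_self i M⟩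
        · exact Finset.insert_subset hi (hsub.trans (Finset.erase_subset i K))
        · rw [Finset.card_insert_of_notMem hiM, hcard]; omega
      · intro L hL
        simp only [Finset.mem_filter] at hL
        exact Finset.insert_erase hL.2
      · intro M hM
        rw [Finset.mem_powersetCard] at hM
        have hiM : i ∉ M := fun h => (Finset.mem_erase.mp (hM.1 h)).1 rfl
        exact Finset.erase_insert hiM
    rw [hbij, Finset.card_powersetCard, Finset.card_erase_of_mem hi, hK]
  have hsum : ∑ L ∈ K.powersetCard l, ∑ i ∈ L, |z i|
      = ((k-1).choose (l-1) : ℝ) * ∑ i ∈ K, |z i| := by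
    have hrw : ∀ L ∈ K.powersetCard l,
        ∑ i ∈ L, |z i| = ∑ i ∈ K, if i ∈ L then |z i| else 0 := by
      intro L hL
      rw [Finset.mem_powersetCard] at hL
      rw [Finset.sum_ite_mem, Finset.inter_eq_right.mpr hL.1]
    rw [Finset.sum_congr rfl hrw, Finset.sum_comm, Finset.mul_sum]
    apply Finset.sum_congr rfl
    intro i hi
    rw [Finset.sum_ite, Finset.sum_const, Finset.sum_const_zero, add_zero,
      nsmul_eq_mul, hcount i hi]
  rw [hr, one_div, inv_mul_eq_div, le_div_iff₀ hC]
  calc (∑ i ∈ K, |z i|) / S * ((k-1).choose (l-1) : ℝ)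
      = (∑ L ∈ K.powersetCard l, ∑ i ∈ L, |z i|) / S := by
        rw [hsum]; ring
    _ = ∑ L ∈ K.powersetCard l, (∑ i ∈ L, |z i|) / S := by rw [Finset.sum_div]
    _ ≤ ∑ L ∈ K.powersetCard l, α L := by
        apply Finset.sum_le_sum
        intro L hL
        rw [Finset.mem_powersetCard] at hL
        exact (hα L hL.1 hL.2).2 ⟨z, hz0, hzne, rfl⟩
end

section
/- Fix a set K with |K| = k and 1 ≤ l ≤ k. Consider the linear program: maximize Σ_{j ∈ K} x_j subject to x_j ≥ 0 for all j ∈ K and Σ_{t ∈ L} x_t ≤ α_{l,L} for every subset L ⊆ K with |L| = l. Then the optimal value of this linear program is an upper bound on α_{k,K} := sup over nonzero null-space vectors z of ‖z_K‖₁/‖z‖₁. -/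
/-- the optimal value of the linear program
max Σ_{j ∈ K} x_j s.t. x ≥ 0 and Σ_{t ∈ L} x_t ≤ α_{l,L} for every l-subset L of K
is an upper bound on α_{k,K}. -/
theorem lp_upper_bound
    (p n k l : ℕ) (hl : 1 ≤ l) (hlk : l ≤ k)
    (A : Matrix (Fin p) (Fin n) ℝ)
    (hN : ∃ z : Fin n → ℝ, A.mulVec z = 0 ∧ z ≠ 0)
    (K : Finset (Fin n)) (hK : K.card = k)
    (α : Finset (Fin n) → ℝ)
    (hα : ∀ L : Finset (Fin n), L ⊆ K → L.card = l →
        IsGreatest {r : ℝ | ∃ z : Fin n → ℝ, A.mulVec z = 0 ∧ z ≠ 0 ∧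
          r = (∑ i ∈ L, |z i|) / (∑ i, |z i|)} (α L))
    (αkK : ℝ)
    (hαkK : IsGreatest {r : ℝ | ∃ z : Fin n → ℝ, A.mulVec z = 0 ∧ z ≠ 0 ∧
        r = (∑ i ∈ K, |z i|) / (∑ i, |z i|)} αkK)
    (v : ℝ)
    (hv : IsGreatest {r : ℝ | ∃ x : Fin n → ℝ, (∀ j ∈ K, 0 ≤ x j) ∧
        (∀ L : Finset (Fin n), L ⊆ K → L.card = l → ∑ t ∈ L, x t ≤ α L) ∧
        r = ∑ j ∈ K, x j} v) :
    αkK ≤ v := by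
  obtain ⟨z, hz0, hzne, hr⟩ := hαkK.1
  set S : ℝ := ∑ i, |z i| with hS
  have hSpos : 0 < S := by
    have : ∃ i, z i ≠ 0 := by
      by_contra h
      push_neg at h
      exact hzne (funext h)
    obtain ⟨i, hi⟩ := this
    exact Finset.sum_pos' (fun j _ => abs_nonneg _)
      ⟨i, Finset.mem_univ i, abs_pos.mpr hi⟩
  apply hv.2
  refine ⟨fun j => |z j| / S, fun j _ => div_nonneg (abs_nonneg _) hSpos.le, ?_, ?_⟩
  · intro L hLK hLl
    rw [← Finset.sum_div]
    exact (hα L hLK hLl).2 ⟨z, hz0, hzne, rfl⟩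
  · rw [hr, Finset.sum_div]
end

section
/- Let 1 ≤ a < l ≤ k. Suppose γ : (l-subsets of {1,...,n}) → R≥0 satisfies Σ_L γ_L ≤ k/l and, for every 1 ≤ b ≤ l and every b-element set I, Σ_{L ⊇ I} γ_L ≤ C(k-b,l-b)/C(k-1,l-1). Define γ'_A := (1/C(l-1,a-1)) · Σ_{L ⊇ A} γ_L for each a-element subset A. Then γ' satisfies: γ'_A ≥ 0, Σ_A γ'_A ≤ k/a, and for every 1 ≤ b ≤ a and every b-element set I, Σ_{A ⊇ I} γ'_A ≤ C(k-b,a-b)/C(k-1,a-1). -/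
open Finset

/-- Count of a-sets between I and L. -/
lemma count_between {α : Type*} [DecidableEq α] (I L : Finset α) (a : ℕ)
    (hIL : I ⊆ L) (haI : I.card ≤ a) :
    ((L.powersetCard a).filter (fun A => I ⊆ A)).card
      = (L.card - I.card).choose (a - I.card) := by
  rw [← Finset.card_sdiff_of_subset hIL, ← Finset.card_powersetCard]
  apply Finset.card_bij (fun A _ => A \ I)
  · intro A hA
    simp only [Finset.mem_filter, Finset.mem_powersetCard] at hA ⊢
    refine ⟨Finset.sdiff_subset_sdiff hA.1.1 (le_refl _), ?_⟩
    rw [Finset.card_sdiff_of_subset hA.2, hA.1.2]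
  · intro A hA A' hA' h
    simp only [Finset.mem_filter, Finset.mem_powersetCard] at hA hA'
    have := congrArg (fun s => s ∪ I) h
    simpa [Finset.sdiff_union_of_subset hA.2, Finset.sdiff_union_of_subset hA'.2] using this
  · intro B hB
    simp only [Finset.mem_powersetCard] at hB
    have hdisj : Disjoint B I := Finset.sdiff_disjoint.mono_left hB.1
    refine ⟨B ∪ I, ?_, ?_⟩
    · simp only [Finset.mem_filter, Finset.mem_powersetCard]
      refine ⟨⟨Finset.union_subset (hB.1.trans Finset.sdiff_subset) hIL, ?_⟩,
        Finset.subset_union_right⟩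
      rw [Finset.card_union_of_disjoint hdisj, hB.2]
      omega
    · rw [Finset.union_sdiff_right, Finset.sdiff_eq_self_of_disjoint hdisj]

lemma swap_sum {n : ℕ} (a l : ℕ) (γ : Finset (Fin n) → ℝ) (I : Finset (Fin n)) :
    ∑ A ∈ (Finset.univ.powersetCard a).filter (fun A => I ⊆ A),
      ∑ L ∈ (Finset.univ.powersetCard l).filter (fun L => A ⊆ L), γ L
    = ∑ L ∈ (Finset.univ.powersetCard l).filter (fun L => I ⊆ L),
        (((L.powersetCard a).filter (fun A => I ⊆ A)).card : ℝ) * γ L := by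
  have h1 : ∑ A ∈ (Finset.univ.powersetCard a).filter (fun A => I ⊆ A),
      ∑ L ∈ (Finset.univ.powersetCard l).filter (fun L => A ⊆ L), γ L
    = ∑ L ∈ Finset.univ.powersetCard l,
        ∑ A ∈ (Finset.univ.powersetCard a).filter (fun A => I ⊆ A),
          (if A ⊆ L then γ L else 0) := by
    rw [← Finset.sum_comm]
    exact Finset.sum_congr rfl fun A _ => Finset.sum_filter _ _
  rw [h1]
  rw [Finset.sum_filter]
  apply Finset.sum_congr rfl
  intro L hL
  have hset : ((Finset.univ.powersetCard a).filter (fun A => I ⊆ A)).filter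
      (fun A => A ⊆ L) = (L.powersetCard a).filter (fun A => I ⊆ A) := by
    ext A
    simp only [Finset.mem_filter, Finset.mem_powersetCard, Finset.subset_univ, true_and]
    tauto
  have h2 : ∑ A ∈ (Finset.univ.powersetCard a).filter (fun A => I ⊆ A),
      (if A ⊆ L then γ L else 0)
    = (((L.powersetCard a).filter (fun A => I ⊆ A)).card : ℝ) * γ L := by
    rw [← Finset.sum_filter, hset, Finset.sum_const, nsmul_eq_mul]
  rw [h2]
  by_cases hIL : I ⊆ L
  · rw [if_pos hIL]
  · rw [if_neg hIL]
    have : ((L.powersetCard a).filter (fun A => I ⊆ A)) = ∅ := by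
      apply Finset.filter_false_of_mem
      intro A hA hIA
      exact hIL (hIA.trans (Finset.mem_powersetCard.mp hA).1)
    rw [this]
    simp

/-- from feasible coefficients γ on l-subsets one obtains feasible
coefficients γ' on a-subsets via γ'_A = (1/C(l-1,a-1)) Σ_{L ⊇ A} γ_L. -/
theorem induced_coefficients_feasible
    (n k l a : ℕ) (ha : 1 ≤ a) (hal : a < l) (hlk : l ≤ k)
    (γ : Finset (Fin n) → ℝ)
    (hγnn : ∀ L ∈ Finset.univ.powersetCard l, 0 ≤ γ L)
    (hγsum : ∑ L ∈ Finset.univ.powersetCard l, γ L ≤ (k : ℝ) / l)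
    (hγI : ∀ b : ℕ, 1 ≤ b → b ≤ l → ∀ I : Finset (Fin n), I.card = b →
      ∑ L ∈ (Finset.univ.powersetCard l).filter (fun L => I ⊆ L), γ L
        ≤ (Nat.choose (k - b) (l - b) : ℝ) / (Nat.choose (k - 1) (l - 1) : ℝ))
    (γ' : Finset (Fin n) → ℝ)
    (hγ' : ∀ A : Finset (Fin n), A.card = a →
      γ' A = (1 / (Nat.choose (l - 1) (a - 1) : ℝ)) *
        ∑ L ∈ (Finset.univ.powersetCard l).filter (fun L => A ⊆ L), γ L) :
    (∀ A ∈ Finset.univ.powersetCard a, 0 ≤ γ' A) ∧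
    (∑ A ∈ Finset.univ.powersetCard a, γ' A ≤ (k : ℝ) / a) ∧
    (∀ b : ℕ, 1 ≤ b → b ≤ a → ∀ I : Finset (Fin n), I.card = b →
      ∑ A ∈ (Finset.univ.powersetCard a).filter (fun A => I ⊆ A), γ' A
        ≤ (Nat.choose (k - b) (a - b) : ℝ) / (Nat.choose (k - 1) (a - 1) : ℝ)) := by
  have hc1pos : 0 < (Nat.choose (l - 1) (a - 1) : ℝ) := by
    exact_mod_cast Nat.choose_pos (by omega)
  -- nonnegativity
  have hnn : ∀ A ∈ Finset.univ.powersetCard a, 0 ≤ γ' A := by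
    intro A hA
    have hAc : A.card = a := (Finset.mem_powersetCard.mp hA).2
    rw [hγ' A hAc]
    apply mul_nonneg (by positivity)
    exact Finset.sum_nonneg fun L hL => hγnn L (Finset.mem_filter.mp hL).1
  refine ⟨hnn, ?_, ?_⟩
  · -- total sum bound
    have hfa : (Finset.univ.powersetCard a : Finset (Finset (Fin n)))
        = (Finset.univ.powersetCard a).filter (fun A => (∅ : Finset (Fin n)) ⊆ A) := by
      simp
    have hsum : ∑ A ∈ (Finset.univ.powersetCard a).filter (fun A => (∅ : Finset (Fin n)) ⊆ A), γ' A
        = (1 / (Nat.choose (l - 1) (a - 1) : ℝ)) *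
          ∑ A ∈ (Finset.univ.powersetCard a).filter (fun A => (∅ : Finset (Fin n)) ⊆ A),
            ∑ L ∈ (Finset.univ.powersetCard l).filter (fun L => A ⊆ L), γ L := by
      rw [Finset.mul_sum]
      apply Finset.sum_congr rfl
      intro A hA
      exact hγ' A (Finset.mem_powersetCard.mp (Finset.mem_filter.mp hA).1).2
    rw [hfa, hsum, swap_sum]
    have hcnt : ∀ L ∈ (Finset.univ.powersetCard l).filter
        (fun L => (∅ : Finset (Fin n)) ⊆ L),
        (((L.powersetCard a).filter (fun A => (∅ : Finset (Fin n)) ⊆ A)).card : ℝ) * γ L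
          = (l.choose a : ℝ) * γ L := by
      intro L hL
      have hLc : L.card = l := (Finset.mem_powersetCard.mp (Finset.mem_filter.mp hL).1).2
      rw [count_between ∅ L a (Finset.empty_subset L) (by simp)]
      simp [hLc]
    rw [Finset.sum_congr rfl hcnt, ← Finset.mul_sum]
    have hfl : (Finset.univ.powersetCard l : Finset (Finset (Fin n))).filter
        (fun L => (∅ : Finset (Fin n)) ⊆ L) = Finset.univ.powersetCard l := by simp
    rw [hfl]
    have hkey : (l : ℝ) * (Nat.choose (l - 1) (a - 1) : ℝ) = (l.choose a : ℝ) * a := by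
      have := Nat.add_one_mul_choose_eq (l - 1) (a - 1)
      have h1 : l - 1 + 1 = l := by omega
      have h2 : a - 1 + 1 = a := by omega
      rw [h1, h2] at this
      exact_mod_cast this
    have hS : ∑ L ∈ Finset.univ.powersetCard l, γ L ≤ (k : ℝ) / l := hγsum
    have hla : (0:ℝ) < l := by exact_mod_cast (by omega : 0 < l)
    have haR : (0:ℝ) < a := by exact_mod_cast (by omega : 0 < a)
    calc (1 / (Nat.choose (l - 1) (a - 1) : ℝ)) *
          ((l.choose a : ℝ) * ∑ L ∈ Finset.univ.powersetCard l, γ L)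
        ≤ (1 / (Nat.choose (l - 1) (a - 1) : ℝ)) * ((l.choose a : ℝ) * ((k : ℝ) / l)) := by
          apply mul_le_mul_of_nonneg_left _ (by positivity)
          exact mul_le_mul_of_nonneg_left hS (by positivity)
      _ = (k : ℝ) / a := by
          field_simp
          nlinarith [hkey]
  · -- the per-set bound
    intro b hb1 hba I hI
    have hbl : b ≤ l := by omega
    have hsum : ∑ A ∈ (Finset.univ.powersetCard a).filter (fun A => I ⊆ A), γ' A
        = (1 / (Nat.choose (l - 1) (a - 1) : ℝ)) *
          ∑ A ∈ (Finset.univ.powersetCard a).filter (fun A => I ⊆ A),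
            ∑ L ∈ (Finset.univ.powersetCard l).filter (fun L => A ⊆ L), γ L := by
      rw [Finset.mul_sum]
      apply Finset.sum_congr rfl
      intro A hA
      exact hγ' A (Finset.mem_powersetCard.mp (Finset.mem_filter.mp hA).1).2
    rw [hsum, swap_sum]
    have hcnt : ∀ L ∈ (Finset.univ.powersetCard l).filter (fun L => I ⊆ L),
        (((L.powersetCard a).filter (fun A => I ⊆ A)).card : ℝ) * γ L
          = ((l - b).choose (a - b) : ℝ) * γ L := by
      intro L hL
      obtain ⟨hLm, hIL⟩ := Finset.mem_filter.mp hL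
      have hLc : L.card = l := (Finset.mem_powersetCard.mp hLm).2
      rw [count_between I L a hIL (by omega), hLc, hI]
    rw [Finset.sum_congr rfl hcnt, ← Finset.mul_sum]
    have hX := hγI b hb1 hbl I hI
    have hck1l1 : 0 < (Nat.choose (k - 1) (l - 1) : ℝ) := by
      exact_mod_cast Nat.choose_pos (by omega)
    have hck1a1 : 0 < (Nat.choose (k - 1) (a - 1) : ℝ) := by
      exact_mod_cast Nat.choose_pos (by omega)
    calc (1 / (Nat.choose (l - 1) (a - 1) : ℝ)) *
          (((l - b).choose (a - b) : ℝ) *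
            ∑ L ∈ (Finset.univ.powersetCard l).filter (fun L => I ⊆ L), γ L)
        ≤ (1 / (Nat.choose (l - 1) (a - 1) : ℝ)) *
          (((l - b).choose (a - b) : ℝ) *
            ((Nat.choose (k - b) (l - b) : ℝ) / (Nat.choose (k - 1) (l - 1) : ℝ))) := by
          apply mul_le_mul_of_nonneg_left _ (by positivity)
          exact mul_le_mul_of_nonneg_left hX (by positivity)
      _ = (Nat.choose (k - b) (a - b) : ℝ) / (Nat.choose (k - 1) (a - 1) : ℝ) := by
          have E1 : (k - b).choose (l - b) * (l - b).choose (a - b)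
              = (k - b).choose (a - b) * (k - a).choose (l - a) := by
            have := Nat.choose_mul (n := k - b) (k := l - b) (s := a - b)
              (by omega)
            have h1 : k - b - (a - b) = k - a := by omega
            have h2 : l - b - (a - b) = l - a := by omega
            rw [h1, h2] at this
            exact this
          have E2 : (k - 1).choose (l - 1) * (l - 1).choose (a - 1)
              = (k - 1).choose (a - 1) * (k - a).choose (l - a) := by
            have := Nat.choose_mul (n := k - 1) (k := l - 1) (s := a - 1)
              (by omega)
            have h1 : k - 1 - (a - 1) = k - a := by omega
            have h2 : l - 1 - (a - 1) = l - a := by omega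
            rw [h1, h2] at this
            exact this
          have E1' : ((k - b).choose (l - b) : ℝ) * ((l - b).choose (a - b) : ℝ)
              = ((k - b).choose (a - b) : ℝ) * ((k - a).choose (l - a) : ℝ) := by
            exact_mod_cast E1
          have E2' : ((k - 1).choose (l - 1) : ℝ) * ((l - 1).choose (a - 1) : ℝ)
              = ((k - 1).choose (a - 1) : ℝ) * ((k - a).choose (l - a) : ℝ) := by
            exact_mod_cast E2
          have hkala : 0 < ((k - a).choose (l - a) : ℝ) := by
            exact_mod_cast Nat.choose_pos (by omega)
          field_simp
          nlinarith [E1', E2', hkala, hc1pos, hck1l1, hck1a1]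
end

section
/- (Null space condition implies exact recovery) Let A ∈ R^{(n-m)×n} and suppose that for every nonzero z with Az = 0 and every index set K with |K| ≤ k, ‖z_K‖₁ < ‖z_{K̄}‖₁. Then for every k-sparse vector x (at most k nonzero entries), x is the unique minimizer of ‖w‖₁ subject to Aw = Ax. -/
open Finset in
/-- the null space condition implies that every k-sparse vector is the
unique ℓ¹ minimizer subject to the measurement constraint. -/
theorem nsc_implies_recovery
    (p n k : ℕ)
    (A : Matrix (Fin p) (Fin n) ℝ)
    (hNSC : ∀ z : Fin n → ℝ, z ≠ 0 → A.mulVec z = 0 →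
      ∀ K : Finset (Fin n), K.card ≤ k →
        ∑ i ∈ K, |z i| < ∑ i ∈ Kᶜ, |z i|)
    (x : Fin n → ℝ)
    (hx : (Finset.univ.filter (fun i => x i ≠ 0)).card ≤ k) :
    ∀ w : Fin n → ℝ, A.mulVec w = A.mulVec x → w ≠ x →
      ∑ i, |x i| < ∑ i, |w i| := by
  intro w hAw hwx
  set z : Fin n → ℝ := w - x with hz
  have hz0 : z ≠ 0 := sub_ne_zero.mpr hwx
  have hAz : A.mulVec z = 0 := by
    have := Matrix.mulVec_sub A w x
    rw [hz, this, hAw, sub_self]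
  set K : Finset (Fin n) := Finset.univ.filter (fun i => x i ≠ 0) with hK
  have key := hNSC z hz0 hAz K hx
  have hxK : ∀ i ∈ Kᶜ, x i = 0 := by
    intro i hi
    simp [hK, Finset.mem_compl, Finset.mem_filter] at hi
    exact hi
  have h1 : ∑ i, |x i| = ∑ i ∈ K, |x i| := by
    rw [← Finset.sum_add_sum_compl K]
    have : ∑ i ∈ Kᶜ, |x i| = 0 := Finset.sum_eq_zero fun i hi => by rw [hxK i hi, abs_zero]
    rw [this, add_zero]
  have h2 : ∑ i, |w i| = ∑ i ∈ K, |w i| + ∑ i ∈ Kᶜ, |z i| := by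
    rw [← Finset.sum_add_sum_compl K]
    congr 1
    apply Finset.sum_congr rfl
    intro i hi
    simp [hz, hxK i hi]
  have h3 : ∀ i ∈ K, |x i| - |z i| ≤ |w i| := by
    intro i _
    have : |x i| - |z i| ≤ |x i + z i| := by
      have := abs_add_le (x i + z i) (-z i)
      simp at this
      linarith [abs_neg (z i) ▸ this]
    simpa [hz, add_sub_cancel] using this
  have h4 : ∑ i ∈ K, (|x i| - |z i|) ≤ ∑ i ∈ K, |w i| := Finset.sum_le_sum h3
  rw [h1, h2, Finset.sum_sub_distrib] at *
  linarith
end
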